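/- Let G and G' be two generalized Fibonacci sequences with seed values α, β and α', β' respectively. Then for all n and i with 1 ≤ i ≤ n, β'·G(n) + α'·G(n-1) = G(n-i+1)·G'(i) + G(n-i)·G'(i-1). -/
import Mathlib

theorem stmt_4 (α β α' β' : ℝ) (G G' : ℕ → ℝ)
    (hG0 : G 0 = α) (hG1 : G 1 = β) (hG : ∀ n, G (n + 2) = G (n + 1) + G n)
    (hG'0 : G' 0 = α') (hG'1 : G' 1 = β') (hG' : ∀ n, G' (n + 2) = G' (n + 1) + G' n)
    (n i : ℕ) (hi1 : 1 ≤ i) (hin : i ≤ n) :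
    β' * G n + α' * G (n - 1) = G (n - i + 1) * G' i + G (n - i) * G' (i - 1) := by
  induction i with
  | zero => omega
  | succ j ih =>
    rcases Nat.eq_zero_or_pos j with rfl | hj
    · obtain ⟨m, rfl⟩ : ∃ m, n = m + 1 := ⟨n - 1, by omega⟩
      simp [hG'0, hG'1]
      ring
    · obtain ⟨j', rfl⟩ : ∃ j', j = j' + 1 := ⟨j - 1, by omega⟩
      obtain ⟨k, rfl⟩ : ∃ k, n = k + (j' + 2) := ⟨n - (j' + 2), by omega⟩
      have h1 := ih (by omega) (by omega)
      have e1 : k + (j' + 2) - (j' + 1) = k + 1 := by omega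
      have e2 : k + (j' + 2) - (j' + 2) = k := by omega
      rw [e1] at h1
      rw [e2, h1]
      simp only [Nat.add_sub_cancel]
      rw [hG' j', hG k]
      ring
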